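/- Let d ≥ 3 and let q > (d−2)/(2(d−1)). Then inf{ G_q(Ω) : Ω ⊂ ℝ^d non-empty, open, bounded and convex } = 0. -/

import Mathlib

open MeasureTheory Metric Set Bornology ENNReal

/-- Torsional rigidity of an open set `Ω ⊆ ℝ^d`:
`T(Ω) = sup { (∫_Ω v)² / ∫ |∇v|² : v ∈ C_c^∞(Ω), ∫ |∇v|² > 0 }`. -/
noncomputable def torsion (d : ℕ) (Ω : Set (EuclideanSpace ℝ (Fin d))) : ℝ :=
  sSup {e : ℝ | ∃ v : EuclideanSpace ℝ (Fin d) → ℝ,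
    ContDiff ℝ (⊤ : ℕ∞) v ∧ HasCompactSupport v ∧ tsupport v ⊆ Ω ∧
    0 < ∫ x, ‖fderiv ℝ v x‖ ^ 2 ∧
    e = (∫ x in Ω, v x) ^ 2 / ∫ x, ‖fderiv ℝ v x‖ ^ 2}

/-- Newtonian capacity of a set `K ⊆ ℝ^d`:
`cap(K) = inf { ∫ |∇φ|² : φ ∈ C¹_c(ℝ^d), φ ≥ 1 on an open neighbourhood of K }`. -/
noncomputable def newtCap (d : ℕ) (K : Set (EuclideanSpace ℝ (Fin d))) : ℝ :=
  sInf {e : ℝ | ∃ φ : EuclideanSpace ℝ (Fin d) → ℝ,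
    ContDiff ℝ 1 φ ∧ HasCompactSupport φ ∧
    (∃ U : Set (EuclideanSpace ℝ (Fin d)), IsOpen U ∧ K ⊆ U ∧ ∀ x ∈ U, 1 ≤ φ x) ∧
    e = ∫ x, ‖fderiv ℝ φ x‖ ^ 2}

/-- The scaling invariant shape functional
`G_q(Ω) = cap(Ω̄) T(Ω)^q / |Ω|^{1+q+2(q-1)/d}`. -/
noncomputable def Gfun (d : ℕ) (q : ℝ) (Ω : Set (EuclideanSpace ℝ (Fin d))) : ℝ :=
  newtCap d (closure Ω) * torsion d Ω ^ q /
    (volume Ω).toReal ^ (1 + q + 2 * (q - 1) / d)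

/-- The inradius of a set `A ⊆ ℝ^d`. -/
noncomputable def inradius (d : ℕ) (A : Set (EuclideanSpace ℝ (Fin d))) : ℝ :=
  sSup {r : ℝ | 0 ≤ r ∧ ∃ x, ball x r ⊆ A}

namespace GqAux

lemma cs_integral {α : Type*} [MeasurableSpace α] {μ : Measure α} [IsFiniteMeasure μ]
    {f : α → ℝ} (hf : MemLp f 2 μ) :
    (∫ x, f x ∂μ) ^ 2 ≤ (μ Set.univ).toReal * ∫ x, f x ^ 2 ∂μ := by
  have hpq : Real.HolderConjugate 2 2 := Real.HolderConjugate.two_two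
  have hf2 : MemLp (fun x => |f x|) (ENNReal.ofReal 2) μ := by
    simpa [Real.norm_eq_abs, ENNReal.ofReal_ofNat] using hf.norm
  have hg2 : MemLp (fun _ : α => (1 : ℝ)) (ENNReal.ofReal 2) μ := memLp_const 1
  have H := integral_mul_le_Lp_mul_Lq_of_nonneg (μ := μ) hpq
      (Filter.Eventually.of_forall fun x => abs_nonneg (f x))
      (Filter.Eventually.of_forall fun _ => zero_le_one) hf2 hg2
  simp only [mul_one, Real.one_rpow, integral_const, smul_eq_mul] at H
  have hA : (0:ℝ) ≤ ∫ x, |f x| ^ (2:ℝ) ∂μ :=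
    integral_nonneg fun x => Real.rpow_nonneg (abs_nonneg _) _
  have hM : (0:ℝ) ≤ (μ Set.univ).toReal := ENNReal.toReal_nonneg
  have habs : |∫ x, f x ∂μ| ≤ ∫ x, |f x| ∂μ := by
    simpa [Real.norm_eq_abs] using norm_integral_le_integral_norm (μ := μ) f
  have h1 : (∫ x, f x ∂μ) ^ 2 ≤ (∫ x, |f x| ∂μ) ^ 2 := by
    rw [← sq_abs (∫ x, f x ∂μ)]
    exact pow_le_pow_left₀ (abs_nonneg _) habs 2
  have h2 : (∫ x, |f x| ∂μ) ^ 2 ≤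
      ((∫ x, |f x| ^ (2:ℝ) ∂μ) ^ (1/2:ℝ) * ((μ Set.univ).toReal) ^ (1/2:ℝ)) ^ 2 :=
    pow_le_pow_left₀ (integral_nonneg fun x => abs_nonneg _) H 2
  have hsq : ∀ a : ℝ, 0 ≤ a → (a ^ (1/2:ℝ)) ^ 2 = a := by
    intro a ha
    rw [← Real.rpow_natCast (a ^ (1/2:ℝ)) 2, ← Real.rpow_mul ha]
    norm_num
  have h3 : ((∫ x, |f x| ^ (2:ℝ) ∂μ) ^ (1/2:ℝ) * ((μ Set.univ).toReal) ^ (1/2:ℝ)) ^ 2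
      = (∫ x, |f x| ^ (2:ℝ) ∂μ) * (μ Set.univ).toReal := by
    rw [mul_pow, hsq _ hA, hsq _ hM]
  have h4 : ∫ x, |f x| ^ (2:ℝ) ∂μ = ∫ x, f x ^ 2 ∂μ := by
    refine integral_congr_ae (Filter.Eventually.of_forall fun x => ?_)
    show |f x| ^ (2:ℝ) = f x ^ 2
    rw [show ((2:ℝ) = ((2:ℕ):ℝ)) by norm_num, Real.rpow_natCast, sq_abs]
  calc (∫ x, f x ∂μ) ^ 2 ≤ _ := h1
    _ ≤ _ := h2
    _ = (∫ x, f x ^ 2 ∂μ) * (μ Set.univ).toReal := by rw [h3, h4]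
    _ = (μ Set.univ).toReal * ∫ x, f x ^ 2 ∂μ := mul_comm _ _

lemma oneD {t : ℝ} (ht : 0 < t) {g : ℝ → ℝ} (hg : ContDiff ℝ 1 g)
    (h0 : ∀ s : ℝ, s ∉ Ioo 0 t → g s = 0) :
    ∫ s, g s ^ 2 ≤ t ^ 2 * ∫ s, deriv g s ^ 2 := by
  have hsupp : HasCompactSupport g :=
    HasCompactSupport.intro isCompact_Icc fun s hs => h0 s fun h => hs (Ioo_subset_Icc_self h)
  have hgc : Continuous g := hg.continuous
  have hdc : Continuous (deriv g) := hg.continuous_deriv le_rfl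
  have hts : tsupport g ⊆ Icc 0 t := by
    refine closure_minimal ?_ isClosed_Icc
    intro s hs
    by_contra hns
    exact hs (h0 s fun h => hns (Ioo_subset_Icc_self h))
  have hderiv0 : ∀ s : ℝ, s ∉ Icc 0 t → deriv g s = 0 := by
    intro s hs
    have : s ∉ tsupport g := fun h => hs (hts h)
    by_contra h'
    exact this (support_deriv_subset (Function.mem_support.mpr h'))
  have hsuppd : HasCompactSupport (deriv g) := hsupp.deriv
  have hIg2 : Integrable (fun s => g s ^ 2) := by
    refine (hgc.pow 2).integrable_of_hasCompactSupport ?_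
    exact (hsupp.comp_left (g := fun x : ℝ => x ^ 2) (by norm_num) : _)
  have hId2 : Integrable (fun s => deriv g s ^ 2) := by
    refine (hdc.pow 2).integrable_of_hasCompactSupport ?_
    exact (hsuppd.comp_left (g := fun x : ℝ => x ^ 2) (by norm_num) : _)
  have hIdabs : Integrable (fun s => |deriv g s|) := by
    refine hdc.abs.integrable_of_hasCompactSupport ?_
    exact (hsuppd.comp_left (g := fun x : ℝ => |x|) abs_zero : _)
  set A := ∫ s, deriv g s ^ 2 with hAdef
  have hA : 0 ≤ A := integral_nonneg fun s => sq_nonneg _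
  haveI : IsFiniteMeasure (volume.restrict (Ioc (0:ℝ) t)) := by
    constructor
    rw [Measure.restrict_apply_univ, Real.volume_Ioc]
    exact ENNReal.ofReal_lt_top
  have hmemd : MemLp (fun s => |deriv g s|) 2 (volume.restrict (Ioc (0:ℝ) t)) := by
    refine (Continuous.memLp_of_hasCompactSupport (μ := volume) hdc.abs ?_).restrict _
    exact (hsuppd.comp_left (g := fun x : ℝ => |x|) abs_zero : _)
  -- Cauchy–Schwarz on the interval for |deriv g|
  have hCS : (∫ s in Ioc (0:ℝ) t, |deriv g s|) ^ 2 ≤ t * A := by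
    have := cs_integral (μ := volume.restrict (Ioc (0:ℝ) t)) hmemd
    rw [Measure.restrict_apply_univ, Real.volume_Ioc, sub_zero, ENNReal.toReal_ofReal ht.le] at this
    refine this.trans ?_
    refine mul_le_mul_of_nonneg_left ?_ ht.le
    have h1 : ∫ s in Ioc (0:ℝ) t, |deriv g s| ^ 2 = ∫ s in Ioc (0:ℝ) t, deriv g s ^ 2 := by
      refine integral_congr_ae (Filter.Eventually.of_forall fun s => ?_)
      exact sq_abs _
    rw [h1]
    exact setIntegral_le_integral hId2 (Filter.Eventually.of_forall fun s => sq_nonneg _)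
  -- pointwise bound
  have key : ∀ b : ℝ, g b ^ 2 ≤ t * A := by
    intro b
    have hgb : g b = ∫ s in Iic b, deriv g s := (HasCompactSupport.integral_Iic_deriv_eq hg hsupp b).symm
    have h1 : |g b| ≤ ∫ s in Iic b, |deriv g s| := by
      rw [hgb]
      simpa [Real.norm_eq_abs] using
        norm_integral_le_integral_norm (μ := volume.restrict (Iic b)) (deriv g)
    have h2 : ∫ s in Iic b, |deriv g s| ≤ ∫ s, |deriv g s| :=
      setIntegral_le_integral hIdabs (Filter.Eventually.of_forall fun s => abs_nonneg _)
    have h3 : ∫ s, |deriv g s| = ∫ s in Ioc (0:ℝ) t, |deriv g s| := by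
      rw [← integral_Icc_eq_integral_Ioc]
      refine (setIntegral_eq_integral_of_forall_compl_eq_zero fun s hs => ?_).symm
      rw [hderiv0 s hs, abs_zero]
    have h4 : |g b| ≤ ∫ s in Ioc (0:ℝ) t, |deriv g s| := h1.trans (h2.trans_eq h3)
    calc g b ^ 2 = |g b| ^ 2 := (sq_abs _).symm
      _ ≤ (∫ s in Ioc (0:ℝ) t, |deriv g s|) ^ 2 := pow_le_pow_left₀ (abs_nonneg _) h4 2
      _ ≤ t * A := hCS
  have hfin : ∫ s, g s ^ 2 = ∫ s in Ioc (0:ℝ) t, g s ^ 2 := by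
    refine (setIntegral_eq_integral_of_forall_compl_eq_zero fun s hs => ?_).symm
    rw [h0 s fun h => hs (Ioo_subset_Ioc_self h)]
    ring
  rw [hfin]
  have : ∫ s in Ioc (0:ℝ) t, g s ^ 2 ≤ ∫ _ in Ioc (0:ℝ) t, (t * A) :=
    integral_mono hIg2.restrict (integrable_const _) fun s => key s
  refine this.trans ?_
  rw [integral_const, measureReal_restrict_apply_univ, Real.volume_real_Ioc, sub_zero,
    max_eq_left ht.le, smul_eq_mul]
  nlinarith [hA, ht.le]


/-- widths of the slab -/
def wd (n : ℕ) (t : ℝ) : Fin (n+1) → ℝ := fun i => if i = 0 then t else 1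

/-- the thin slab -/
def slab (n : ℕ) (t : ℝ) : Set (EuclideanSpace ℝ (Fin (n+1))) :=
  {x | ∀ i, x i ∈ Ioo 0 (wd n t i)}

lemma volume_slab (n : ℕ) {t : ℝ} (ht : 0 < t) :
    volume (slab n t) = ENNReal.ofReal t := by
  have h1 : slab n t = (MeasurableEquiv.toLp 2 (Fin (n+1) → ℝ)).symm ⁻¹'
      (Set.pi univ fun i => Ioo 0 (wd n t i)) := by
    ext x
    simp only [slab, mem_setOf_eq, mem_preimage, Set.mem_univ_pi]
    rfl
  rw [h1, (EuclideanSpace.volume_preserving_symm_measurableEquiv_toLp _).measure_preimage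
    (MeasurableSet.univ_pi fun _ => measurableSet_Ioo).nullMeasurableSet,
    volume_pi_pi, Fin.prod_univ_succ]
  simp [wd, Real.volume_Ioo, Fin.succ_ne_zero]

section estimate

variable {n : ℕ} {t : ℝ}

lemma slab_estimate (ht : 0 < t) {v : EuclideanSpace ℝ (Fin (n+1)) → ℝ}
    (hv : ContDiff ℝ (⊤ : ℕ∞) v) (hcs : HasCompactSupport v) (hsup : tsupport v ⊆ slab n t) :
    (∫ x in slab n t, v x) ^ 2 ≤ t ^ 3 * ∫ x, ‖fderiv ℝ v x‖ ^ 2 := by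
  classical
  set E₀ : EuclideanSpace ℝ (Fin (n+1)) := EuclideanSpace.single 0 1 with hE₀
  set Φ : ℝ × (Fin n → ℝ) → EuclideanSpace ℝ (Fin (n+1)) := fun p =>
    (MeasurableEquiv.toLp 2 (Fin (n+1) → ℝ))
      ((MeasurableEquiv.piFinSuccAbove (fun _ : Fin (n+1) => ℝ) 0).symm p) with hΦdef
  have hΦ0 : ∀ p : ℝ × (Fin n → ℝ), Φ p 0 = p.1 := by
    intro p
    show Fin.insertNth (α := fun _ => ℝ) 0 p.1 p.2 0 = p.1
    simp
  have hΦs : ∀ (p : ℝ × (Fin n → ℝ)) (k : Fin n), Φ p k.succ = p.2 k := by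
    intro p k
    show Fin.insertNth (α := fun _ => ℝ) 0 p.1 p.2 k.succ = p.2 k
    rw [show (k.succ) = Fin.succAbove 0 k from (congrFun Fin.succAbove_zero k).symm]
    exact Fin.insertNth_apply_succAbove (α := fun _ => ℝ) 0 p.1 p.2 k
  have hΦline : ∀ (y : Fin n → ℝ) (s : ℝ), Φ (s, y) = Φ (0, y) + s • E₀ := by
    intro y s
    ext j
    have hadd : (Φ (0, y) + s • E₀) j = Φ (0, y) j + s * E₀ j := rfl
    induction j using Fin.cases with
    | zero =>
      rw [hadd, hΦ0, hΦ0, hE₀]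
      simp [EuclideanSpace.single_apply]
    | succ k =>
      rw [hadd, hΦs, hΦs, hE₀]
      simp [EuclideanSpace.single_apply, Fin.succ_ne_zero]
  have hmp : MeasurePreserving Φ volume volume :=
    ((EuclideanSpace.volume_preserving_symm_measurableEquiv_toLp (Fin (n+1))).symm).comp
      ((volume_preserving_piFinSuccAbove (fun _ : Fin (n+1) => ℝ) 0).symm)
  have hemb : MeasurableEmbedding Φ :=
    (MeasurableEquiv.measurableEmbedding _).comp (MeasurableEquiv.measurableEmbedding _)
  have hΦcont : Continuous Φ := by
    have h1 : Φ = fun p : ℝ × (Fin n → ℝ) =>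
        (EuclideanSpace.equiv (Fin (n+1)) ℝ).symm
          (Fin.insertNth (α := fun _ => ℝ) 0 p.1 p.2) := rfl
    rw [h1]
    refine (ContinuousLinearEquiv.continuous _).comp ?_
    refine continuous_pi fun j => ?_
    induction j using Fin.cases with
    | zero => simpa using continuous_fst
    | succ k =>
      have h2 : ∀ p : ℝ × (Fin n → ℝ),
          Fin.insertNth (α := fun _ => ℝ) 0 p.1 p.2 k.succ = p.2 k := by
        intro p
        rw [show (k.succ) = Fin.succAbove 0 k from (congrFun Fin.succAbove_zero k).symm]
        exact Fin.insertNth_apply_succAbove (α := fun _ => ℝ) 0 p.1 p.2 k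
      simp only [h2]
      exact (continuous_apply k).comp continuous_snd
  -- compact support transported
  set K : Set (ℝ × (Fin n → ℝ)) := (Icc (0:ℝ) t) ×ˢ (Set.pi univ fun _ : Fin n => Icc (0:ℝ) 1)
    with hKdef
  have hKc : IsCompact K := isCompact_Icc.prod (isCompact_univ_pi fun _ => isCompact_Icc)
  have hmemK : ∀ p : ℝ × (Fin n → ℝ), Φ p ∈ slab n t → p ∈ K := by
    intro p hp
    constructor
    · have := hp 0
      rw [hΦ0] at this
      simp only [wd, if_pos rfl] at this
      exact Ioo_subset_Icc_self this
    · intro k _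
      have := hp k.succ
      rw [hΦs] at this
      simp only [wd, if_neg (Fin.succ_ne_zero k)] at this
      exact Ioo_subset_Icc_self this
  have hvanish : ∀ p : ℝ × (Fin n → ℝ), p ∉ K → v (Φ p) = 0 := by
    intro p hp
    by_contra h
    exact hp (hmemK p (hsup (subset_closure (Function.mem_support.mpr h))))
  have hfdvanish : ∀ p : ℝ × (Fin n → ℝ), p ∉ K → fderiv ℝ v (Φ p) E₀ = 0 := by
    intro p hp
    by_contra h
    have h1 : fderiv ℝ v (Φ p) ≠ 0 := by
      intro h2; rw [h2] at h; exact h rfl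
    exact hp (hmemK p (hsup (support_fderiv_subset ℝ (Function.mem_support.mpr h1))))
  have hfdE : ∀ x, x ∉ tsupport v → fderiv ℝ v x E₀ = 0 := by
    intro x hx
    by_contra h
    have h1 : fderiv ℝ v x ≠ 0 := fun h2 => by rw [h2] at h; exact h rfl
    exact hx (support_fderiv_subset ℝ (Function.mem_support.mpr h1))
  have hLcont : Continuous (fderiv ℝ v) := hv.continuous_fderiv (by simp)
  -- integrability
  have hFi : Integrable (fun p => v (Φ p) ^ 2) volume := by
    refine ((hv.continuous.comp hΦcont).pow 2).integrable_of_hasCompactSupport ?_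
    refine HasCompactSupport.intro hKc fun p hp => ?_
    show (v ∘ Φ) p ^ 2 = 0
    rw [Function.comp_apply, hvanish p hp]; ring
  have hGi : Integrable (fun p => (fderiv ℝ v (Φ p) E₀) ^ 2) volume := by
    refine (((ContinuousLinearMap.apply ℝ ℝ E₀).continuous.comp
      (hLcont.comp hΦcont)).pow 2).integrable_of_hasCompactSupport ?_
    refine HasCompactSupport.intro hKc fun p hp => ?_
    show (fderiv ℝ v (Φ p) E₀) ^ 2 = 0
    rw [hfdvanish p hp]; ring
  have hIv2E : Integrable (fun x => v x ^ 2) volume := by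
    refine (hv.continuous.pow 2).integrable_of_hasCompactSupport ?_
    refine HasCompactSupport.intro hcs fun x hx => ?_
    show v x ^ 2 = 0
    rw [image_eq_zero_of_notMem_tsupport hx]; ring
  have hIGE : Integrable (fun x => (fderiv ℝ v x E₀) ^ 2) volume := by
    have hc : Continuous fun x : EuclideanSpace ℝ (Fin (n+1)) => (fderiv ℝ v x E₀) ^ 2 :=
      ((ContinuousLinearMap.apply ℝ ℝ E₀).continuous.comp hLcont).pow 2
    refine hc.integrable_of_hasCompactSupport ?_
    refine HasCompactSupport.intro hcs fun x hx => ?_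
    show (fderiv ℝ v x E₀) ^ 2 = 0
    rw [hfdE x hx]; ring
  have hInormE : Integrable (fun x => ‖fderiv ℝ v x‖ ^ 2) volume := by
    refine (hLcont.norm.pow 2).integrable_of_hasCompactSupport ?_
    refine HasCompactSupport.intro hcs fun x hx => ?_
    have h1 : fderiv ℝ v x = 0 := by
      by_contra h
      exact hx (support_fderiv_subset ℝ (Function.mem_support.mpr h))
    show ‖fderiv ℝ v x‖ ^ 2 = 0
    rw [h1]; simp
  -- Step B : Cauchy-Schwarz on the slab
  haveI : IsFiniteMeasure (volume.restrict (slab n t)) := by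
    constructor
    rw [Measure.restrict_apply_univ, volume_slab n ht]
    exact ENNReal.ofReal_lt_top
  have hmem2 : MemLp v 2 (volume.restrict (slab n t)) :=
    (hv.continuous.memLp_of_hasCompactSupport (μ := volume) hcs).restrict _
  have hB : (∫ x in slab n t, v x) ^ 2 ≤ t * ∫ x, v x ^ 2 := by
    have h1 := cs_integral (μ := volume.restrict (slab n t)) hmem2
    rw [Measure.restrict_apply_univ, volume_slab n ht, ENNReal.toReal_ofReal ht.le] at h1
    refine h1.trans (mul_le_mul_of_nonneg_left ?_ ht.le)
    exact setIntegral_le_integral hIv2E (Filter.Eventually.of_forall fun x => sq_nonneg _)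
  -- Step C : 1D Poincaré in the thin direction via Fubini
  have hFi' : Integrable (fun p : ℝ × (Fin n → ℝ) => v (Φ p) ^ 2)
      ((volume : Measure ℝ).prod volume) := by
    rwa [← MeasureTheory.Measure.volume_eq_prod]
  have hGi' : Integrable (fun p : ℝ × (Fin n → ℝ) => (fderiv ℝ v (Φ p) E₀) ^ 2)
      ((volume : Measure ℝ).prod volume) := by
    rwa [← MeasureTheory.Measure.volume_eq_prod]
  have hy : ∀ y : Fin n → ℝ,
      ∫ s, v (Φ (s, y)) ^ 2 ≤ t ^ 2 * ∫ s, (fderiv ℝ v (Φ (s, y)) E₀) ^ 2 := by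
    intro y
    set g : ℝ → ℝ := fun s => v (Φ (s, y)) with hgdef
    have hgeq : g = v ∘ (fun s : ℝ => Φ (0, y) + s • E₀) := by
      funext s
      rw [hgdef]
      show v (Φ (s, y)) = v (Φ (0, y) + s • E₀)
      rw [hΦline y s]
    have hgc : ContDiff ℝ 1 g := by
      rw [hgeq]
      exact (hv.of_le (by simp)).comp (contDiff_const.add (contDiff_id.smul contDiff_const))
    have hg0 : ∀ s : ℝ, s ∉ Ioo 0 t → g s = 0 := by
      intro s hs
      show v (Φ (s, y)) = 0
      refine image_eq_zero_of_notMem_tsupport fun h => hs ?_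
      have h1 := hsup h 0
      rw [hΦ0] at h1
      simpa only [wd, if_pos rfl, ↓reduceIte] using h1
    have hgd : ∀ s : ℝ, deriv g s = fderiv ℝ v (Φ (s, y)) E₀ := by
      intro s
      have h1 : HasDerivAt (fun u : ℝ => Φ (0, y) + u • E₀) E₀ s := by
        simpa using ((hasDerivAt_id s).smul_const E₀).const_add (Φ (0, y))
      have h2 : HasFDerivAt v (fderiv ℝ v (Φ (s, y))) (Φ (0, y) + s • E₀) := by
        rw [← hΦline y s]
        exact (hv.differentiable (by simp) (Φ (s, y))).hasFDerivAt
      have h3 : HasDerivAt g (fderiv ℝ v (Φ (s, y)) E₀) s := by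
        rw [hgeq]
        exact h2.comp_hasDerivAt s h1
      exact h3.deriv
    calc ∫ s, g s ^ 2 ≤ t ^ 2 * ∫ s, deriv g s ^ 2 := oneD ht hgc hg0
      _ = t ^ 2 * ∫ s, (fderiv ℝ v (Φ (s, y)) E₀) ^ 2 := by
        congr 1
        exact integral_congr_ae (Filter.Eventually.of_forall fun s => by
          show deriv g s ^ 2 = (fderiv ℝ v (Φ (s, y)) E₀) ^ 2
          rw [hgd s])
  have hF1 : Integrable (fun y : Fin n → ℝ => ∫ s, v (Φ (s, y)) ^ 2) volume :=
    hFi'.integral_prod_right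
  have hG1 : Integrable (fun y : Fin n → ℝ => ∫ s, (fderiv ℝ v (Φ (s, y)) E₀) ^ 2) volume :=
    hGi'.integral_prod_right
  have hC : ∫ x, v x ^ 2 ≤ t ^ 2 * ∫ x, (fderiv ℝ v x E₀) ^ 2 := by
    have e1 : ∫ x, v x ^ 2 = ∫ p : ℝ × (Fin n → ℝ), v (Φ p) ^ 2 :=
      (hmp.integral_comp hemb _).symm
    have e2 : ∫ x, (fderiv ℝ v x E₀) ^ 2 = ∫ p : ℝ × (Fin n → ℝ), (fderiv ℝ v (Φ p) E₀) ^ 2 :=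
      (hmp.integral_comp hemb _).symm
    have e3 : ∫ p : ℝ × (Fin n → ℝ), v (Φ p) ^ 2
        = ∫ y, ∫ s, v (Φ (s, y)) ^ 2 := by
      rw [MeasureTheory.Measure.volume_eq_prod, integral_prod _ hFi']
      exact integral_integral_swap hFi'
    have e4 : ∫ p : ℝ × (Fin n → ℝ), (fderiv ℝ v (Φ p) E₀) ^ 2
        = ∫ y, ∫ s, (fderiv ℝ v (Φ (s, y)) E₀) ^ 2 := by
      rw [MeasureTheory.Measure.volume_eq_prod, integral_prod _ hGi']
      exact integral_integral_swap hGi'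
    rw [e1, e2, e3, e4]
    calc ∫ y, ∫ s, v (Φ (s, y)) ^ 2
        ≤ ∫ y, t ^ 2 * ∫ s, (fderiv ℝ v (Φ (s, y)) E₀) ^ 2 :=
          integral_mono hF1 (hG1.const_mul (t ^ 2)) fun y => hy y
      _ = t ^ 2 * ∫ y, ∫ s, (fderiv ℝ v (Φ (s, y)) E₀) ^ 2 := integral_const_mul _ _
  -- Step D
  have hDD : ∫ x, (fderiv ℝ v x E₀) ^ 2 ≤ ∫ x, ‖fderiv ℝ v x‖ ^ 2 := by
    refine integral_mono hIGE hInormE fun x => ?_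
    have h1 : |fderiv ℝ v x E₀| ≤ ‖fderiv ℝ v x‖ := by
      have h2 := (fderiv ℝ v x).le_opNorm E₀
      rw [hE₀, EuclideanSpace.norm_single] at h2
      simpa [Real.norm_eq_abs] using h2
    calc (fderiv ℝ v x E₀) ^ 2 = |fderiv ℝ v x E₀| ^ 2 := (sq_abs _).symm
      _ ≤ ‖fderiv ℝ v x‖ ^ 2 := pow_le_pow_left₀ (abs_nonneg _) h1 2
  -- assemble
  have hnn : (0:ℝ) ≤ ∫ x, ‖fderiv ℝ v x‖ ^ 2 := integral_nonneg fun x => sq_nonneg _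
  calc (∫ x in slab n t, v x) ^ 2 ≤ t * ∫ x, v x ^ 2 := hB
    _ ≤ t * (t ^ 2 * ∫ x, (fderiv ℝ v x E₀) ^ 2) := mul_le_mul_of_nonneg_left hC ht.le
    _ ≤ t * (t ^ 2 * ∫ x, ‖fderiv ℝ v x‖ ^ 2) := by
        refine mul_le_mul_of_nonneg_left (mul_le_mul_of_nonneg_left hDD (sq_nonneg t)) ht.le
    _ = t ^ 3 * ∫ x, ‖fderiv ℝ v x‖ ^ 2 := by ring

end estimate

lemma wd_pos {n : ℕ} {t : ℝ} (ht : 0 < t) (i : Fin (n+1)) : 0 < wd n t i := by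
  unfold wd; split <;> [exact ht; norm_num]

lemma wd_le_one {n : ℕ} {t : ℝ} (ht1 : t ≤ 1) (i : Fin (n+1)) : wd n t i ≤ 1 := by
  unfold wd; split
  · exact ht1
  · exact le_refl 1

lemma slab_nonempty {n : ℕ} {t : ℝ} (ht : 0 < t) : (slab n t).Nonempty := by
  refine ⟨WithLp.toLp 2 (fun i => wd n t i / 2), fun i => ?_⟩
  have := wd_pos ht i
  show wd n t i / 2 ∈ Ioo 0 (wd n t i)
  exact ⟨by linarith, by linarith⟩

lemma slab_isOpen {n : ℕ} {t : ℝ} : IsOpen (slab n t) := by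
  have h : slab n t = ⋂ i, (fun x : EuclideanSpace ℝ (Fin (n+1)) => x i) ⁻¹' Ioo 0 (wd n t i) := by
    ext x; simp [slab, mem_iInter]
  rw [h]
  exact isOpen_iInter_of_finite fun i => isOpen_Ioo.preimage (PiLp.continuous_apply _ _ i)

lemma slab_subset_closedBall {n : ℕ} {t : ℝ} (ht1 : t ≤ 1) :
    slab n t ⊆ closedBall 0 (Real.sqrt (n+1)) := by
  intro x hx
  rw [mem_closedBall_zero_iff, EuclideanSpace.norm_eq]
  have h1 : ∑ i, ‖x i‖ ^ 2 ≤ (n+1 : ℝ) := by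
    calc ∑ i, ‖x i‖ ^ 2 ≤ ∑ _i : Fin (n+1), (1:ℝ) := by
          refine Finset.sum_le_sum fun i _ => ?_
          have h2 : |x i| ≤ 1 := by
            have h3 := hx i
            have h4 := wd_le_one ht1 i
            rw [abs_le]
            constructor <;> [linarith [h3.1]; linarith [h3.2]]
          calc ‖x i‖ ^ 2 = |x i| ^ 2 := by rw [Real.norm_eq_abs]
            _ ≤ 1 ^ 2 := pow_le_pow_left₀ (abs_nonneg _) h2 2
            _ = 1 := one_pow 2
      _ = (n+1 : ℝ) := by simp [Finset.sum_const, Finset.card_univ]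
  exact Real.sqrt_le_sqrt h1

lemma slab_isBounded {n : ℕ} {t : ℝ} (ht1 : t ≤ 1) : IsBounded (slab n t) :=
  (isBounded_closedBall).subset (slab_subset_closedBall ht1)

lemma slab_convex {n : ℕ} {t : ℝ} : Convex ℝ (slab n t) := by
  intro x hx y hy a b ha hb hab i
  have := (convex_Ioo (0:ℝ) (wd n t i)) (hx i) (hy i) ha hb hab
  simpa using this

lemma torsion_nonneg (d : ℕ) (Ω : Set (EuclideanSpace ℝ (Fin d))) : 0 ≤ torsion d Ω := by
  refine Real.sSup_nonneg ?_
  rintro e ⟨v, _, _, _, hD, rfl⟩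
  exact div_nonneg (sq_nonneg _) hD.le

lemma newtCap_nonneg (d : ℕ) (K : Set (EuclideanSpace ℝ (Fin d))) : 0 ≤ newtCap d K := by
  refine Real.sInf_nonneg ?_
  rintro e ⟨φ, _, _, _, rfl⟩
  exact integral_nonneg fun x => sq_nonneg _

lemma Gfun_nonneg (d : ℕ) (q : ℝ) (Ω : Set (EuclideanSpace ℝ (Fin d))) : 0 ≤ Gfun d q Ω := by
  refine div_nonneg (mul_nonneg (newtCap_nonneg _ _) ?_) ?_
  · exact Real.rpow_nonneg (torsion_nonneg _ _) _
  · exact Real.rpow_nonneg ENNReal.toReal_nonneg _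

lemma torsion_slab_le (n : ℕ) {t : ℝ} (ht : 0 < t) : torsion (n+1) (slab n t) ≤ t ^ 3 := by
  refine Real.sSup_le ?_ (by positivity)
  rintro e ⟨v, hv, hcs, hsub, hD, rfl⟩
  rw [div_le_iff₀ hD]
  exact slab_estimate ht hv hcs hsub

lemma cap_slab_le (n : ℕ) (hn : 1 ≤ n) :
    ∃ C : ℝ, 0 ≤ C ∧ ∀ t : ℝ, 0 < t → t ≤ 1 → newtCap (n+1) (closure (slab n t)) ≤ C := by
  have h01 : (0:ℝ) < (n+1:ℝ) := by positivity
  have hio : ((n:ℝ)+1) < (n:ℝ)+2 := by linarith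
  let b : ContDiffBump (0 : EuclideanSpace ℝ (Fin (n+1))) :=
    ⟨(n:ℝ)+1, (n:ℝ)+2, by positivity, hio⟩
  refine ⟨∫ x, ‖fderiv ℝ (b : EuclideanSpace ℝ (Fin (n+1)) → ℝ) x‖ ^ 2,
    integral_nonneg fun x => sq_nonneg _, ?_⟩
  intro t ht ht1
  have hbdd : BddBelow {e : ℝ | ∃ φ : EuclideanSpace ℝ (Fin (n+1)) → ℝ,
      ContDiff ℝ 1 φ ∧ HasCompactSupport φ ∧
      (∃ U : Set (EuclideanSpace ℝ (Fin (n+1))), IsOpen U ∧ closure (slab n t) ⊆ U ∧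
        ∀ x ∈ U, 1 ≤ φ x) ∧
      e = ∫ x, ‖fderiv ℝ φ x‖ ^ 2} := by
    refine ⟨0, ?_⟩
    rintro e ⟨φ, _, _, _, rfl⟩
    exact integral_nonneg fun x => sq_nonneg _
  refine csInf_le hbdd ?_
  refine ⟨b, b.contDiff, b.hasCompactSupport, ?_, rfl⟩
  refine ⟨ball 0 ((n:ℝ)+1), isOpen_ball, ?_, ?_⟩
  · have hsub : slab n t ⊆ closedBall 0 (Real.sqrt (n+1)) := slab_subset_closedBall ht1
    have hsq : Real.sqrt ((n:ℝ)+1) < (n:ℝ)+1 := by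
      have h2 : (1:ℝ) < (n:ℝ)+1 := by
        have : (1:ℝ) ≤ (n:ℝ) := by exact_mod_cast hn
        linarith
      nlinarith [Real.sq_sqrt (by positivity : (0:ℝ) ≤ (n:ℝ)+1),
        Real.sqrt_nonneg ((n:ℝ)+1)]
    calc closure (slab n t) ⊆ closedBall 0 (Real.sqrt ((n:ℝ)+1)) := by
          refine closure_minimal ?_ Metric.isClosed_closedBall
          exact_mod_cast hsub
      _ ⊆ ball 0 ((n:ℝ)+1) := closedBall_subset_ball hsq
  · intro x hx
    have : (b : EuclideanSpace ℝ (Fin (n+1)) → ℝ) x = 1 :=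
      b.one_of_mem_closedBall (ball_subset_closedBall hx)
    rw [this]


end GqAux

open GqAux in
/-- Theorem 3(i): for `d ≥ 3` and `q > (d-2)/(2(d-1))`, the infimum of `G_q` over
non-empty open bounded convex subsets of `ℝ^d` equals `0`. -/
theorem inf_Gq_convex_eq_zero (d : ℕ) (hd : 3 ≤ d) (q : ℝ)
    (hq : ((d : ℝ) - 2) / (2 * ((d : ℝ) - 1)) < q) :
    sInf {x : ℝ | ∃ Ω : Set (EuclideanSpace ℝ (Fin d)),
      Ω.Nonempty ∧ IsOpen Ω ∧ IsBounded Ω ∧ Convex ℝ Ω ∧ x = Gfun d q Ω} = 0 := by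

  obtain ⟨n, rfl⟩ : ∃ n : ℕ, d = n + 1 := ⟨d - 1, by omega⟩
  have hn : 1 ≤ n := by omega
  set S := {x : ℝ | ∃ Ω : Set (EuclideanSpace ℝ (Fin (n+1))),
      Ω.Nonempty ∧ IsOpen Ω ∧ IsBounded Ω ∧ Convex ℝ Ω ∧ x = Gfun (n+1) q Ω} with hSdef
  set D : ℝ := ((n+1 : ℕ) : ℝ) with hDdef
  have hD3 : (3:ℝ) ≤ D := by show (3:ℝ) ≤ ((n+1:ℕ):ℝ); exact_mod_cast hd
  have hq' : (D - 2) / (2 * (D - 1)) < q := hq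
  have hq0 : 0 < q :=
    lt_of_le_of_lt (div_nonneg (by linarith) (by linarith)) hq'
  set α : ℝ := 1 + q + 2 * (q - 1) / D with hαdef
  set β : ℝ := 3 * q - α with hβdef
  have hβpos : 0 < β := by
    have hnum : 0 < 2 * q * (D - 1) - (D - 2) := by
      have h2 : 0 < 2 * (D - 1) := by linarith
      have := (div_lt_iff₀ h2).mp hq'
      nlinarith
    have hβeq : β = (2 * q * (D - 1) - (D - 2)) / D := by
      rw [hβdef, hαdef]
      field_simp
      ring
    rw [hβeq]
    exact div_pos hnum (by linarith)
  obtain ⟨C, hC0, hC⟩ := cap_slab_le n hn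
  have hmem : ∀ t : ℝ, 0 < t → t ≤ 1 → Gfun (n+1) q (slab n t) ∈ S := by
    intro t ht ht1
    exact ⟨slab n t, slab_nonempty ht, slab_isOpen, slab_isBounded ht1, slab_convex, rfl⟩
  have hS0 : ∀ x ∈ S, 0 ≤ x := by
    rintro x ⟨Ω, _, _, _, _, rfl⟩
    exact Gfun_nonneg _ _ _
  have hne : S.Nonempty := ⟨_, hmem 1 one_pos le_rfl⟩
  have hbound : ∀ t : ℝ, 0 < t → t ≤ 1 → Gfun (n+1) q (slab n t) ≤ C * t ^ β := by
    intro t ht ht1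
    have hvol : ((volume (slab n t)).toReal) = t := by
      rw [volume_slab n ht, ENNReal.toReal_ofReal ht.le]
    have htor : torsion (n+1) (slab n t) ^ q ≤ (t ^ 3) ^ q :=
      Real.rpow_le_rpow (torsion_nonneg _ _) (torsion_slab_le n ht) hq0.le
    have hnum : newtCap (n+1) (closure (slab n t)) * torsion (n+1) (slab n t) ^ q
        ≤ C * (t ^ 3) ^ q :=
      mul_le_mul (hC t ht ht1) htor (Real.rpow_nonneg (torsion_nonneg _ _) _) hC0
    have hden : (0:ℝ) < ((volume (slab n t)).toReal) ^ ((1:ℝ) + q + 2 * (q - 1) / D) := by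
      rw [hvol]
      exact Real.rpow_pos_of_pos ht _
    have hstep : Gfun (n+1) q (slab n t)
        ≤ C * (t ^ 3) ^ q / ((volume (slab n t)).toReal ^ ((1:ℝ) + q + 2 * (q - 1) / D)) := by
      unfold Gfun
      exact (div_le_div_iff_of_pos_right hden).mpr hnum
    refine hstep.trans_eq ?_
    rw [hvol]
    have h3 : (t ^ 3 : ℝ) = t ^ ((3:ℕ) : ℝ) := (Real.rpow_natCast t 3).symm
    rw [h3, ← Real.rpow_mul ht.le]
    rw [mul_div_assoc, ← Real.rpow_sub ht]
    norm_num [hβdef, hαdef]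
  refine le_antisymm ?_ (le_csInf hne hS0)
  refine (Real.sInf_le_iff ⟨0, hS0⟩ hne).mpr ?_
  intro ε hε
  have hC1 : (0:ℝ) < C + 1 := by linarith
  have hpos2 : 0 < ε / (C + 1) := div_pos hε hC1
  set t : ℝ := min 1 ((ε / (C + 1)) ^ (1/β : ℝ)) with htdef
  have ht0 : 0 < t := lt_min one_pos (Real.rpow_pos_of_pos hpos2 _)
  have ht1 : t ≤ 1 := min_le_left _ _
  refine ⟨Gfun (n+1) q (slab n t), hmem t ht0 ht1, ?_⟩
  have h1 : t ^ β ≤ ε / (C + 1) := by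
    have h2 : t ≤ (ε / (C + 1)) ^ (1/β : ℝ) := min_le_right _ _
    calc t ^ β ≤ ((ε / (C + 1)) ^ (1/β : ℝ)) ^ β := Real.rpow_le_rpow ht0.le h2 hβpos.le
      _ = ε / (C + 1) := by
        rw [← Real.rpow_mul hpos2.le, one_div_mul_cancel hβpos.ne', Real.rpow_one]
  have h3 : C * t ^ β ≤ C * (ε / (C + 1)) := mul_le_mul_of_nonneg_left h1 hC0
  have h4 : C * (ε / (C + 1)) < ε := by
    rw [mul_div_assoc']
    rw [div_lt_iff₀ hC1]
    nlinarith
  have h5 := (hbound t ht0 ht1).trans_lt (h3.trans_lt h4)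
  linarith
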